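/- The natural deduction system B is weakly invariant under rseq-substitutions: if the consecution X ⊩ A is provable in B and σ is an rseq-substitution, then σ^ε(X) ⊩ σ^ε(A) is also provable in B. -/

import Mathlib

/-- Formulas of the language L, generated from atoms by ¬, ∧, ∨, →, ∘. -/
inductive Fml : Type
  | atom : ℕ → Fml
  | neg : Fml → Fml
  | conj : Fml → Fml → Fml
  | disj : Fml → Fml → Fml
  | imp : Fml → Fml → Fml
  | fus : Fml → Fml → Fml

/-- Bunches: formulas are the atomic bunches, closed under comma and semicolon. -/
inductive Bunch : Type
  | fml : Fml → Bunch
  | comma : Bunch → Bunch → Bunch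
  | semi : Bunch → Bunch → Bunch

/-- Bunch contexts: a bunch with one distinguished hole at a bunch position. -/
inductive Ctx : Type
  | hole : Ctx
  | commaL : Ctx → Bunch → Ctx
  | commaR : Bunch → Ctx → Ctx
  | semiL : Ctx → Bunch → Ctx
  | semiR : Bunch → Ctx → Ctx

/-- Filling the hole of a bunch context with a bunch. -/
def Ctx.fill : Ctx → Bunch → Bunch
  | .hole, X => X
  | .commaL c Y, X => .comma (c.fill X) Y
  | .commaR Y c, X => .comma Y (c.fill X)
  | .semiL c Y, X => .semi (c.fill X) Y
  | .semiR Y c, X => .semi Y (c.fill X)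

/-- The natural deduction system B; `NDB X A` means the consecution X ⊩ A is provable
(it has a derivation all of whose leaves are instances of (id)). -/
inductive NDB : Bunch → Fml → Prop
  | id (A) : NDB (.fml A) A
  | impI {X A B} : NDB (.semi X (.fml A)) B → NDB X (.imp A B)
  | impE {X Y A B} : NDB X (.imp A B) → NDB Y A → NDB (.semi X Y) B
  | orI1 {X A} (B) : NDB X A → NDB X (.disj A B)
  | orI2 {X B} (A) : NDB X B → NDB X (.disj A B)
  | orE {X A B C} {Y : Ctx} : NDB X (.disj A B) → NDB (Y.fill (.fml A)) C →
      NDB (Y.fill (.fml B)) C → NDB (Y.fill X) C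
  | andI {X Y A B} : NDB X A → NDB Y B → NDB (.comma X Y) (.conj A B)
  | andE {X A B C} {Y : Ctx} : NDB X (.conj A B) →
      NDB (Y.fill (.comma (.fml A) (.fml B))) C → NDB (Y.fill X) C
  | fusI {X Y A B} : NDB X A → NDB Y B → NDB (.semi X Y) (.fus A B)
  | fusE {X A B C} {Y : Ctx} : NDB X (.fus A B) →
      NDB (Y.fill (.semi (.fml A) (.fml B))) C → NDB (Y.fill X) C
  | negI {X A B} : NDB X B → NDB (.fml A) (.neg B) → NDB X (.neg A)
  | negE {X A} : NDB X (.neg (.neg A)) → NDB X A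
  | cut {X A B} {Y : Ctx} : NDB X A → NDB (Y.fill (.fml A)) B → NDB (Y.fill X) B
  | eB {W : Ctx} {X Y Z A} : NDB (W.fill (.comma X (.comma Y Z))) A →
      NDB (W.fill (.comma (.comma X Y) Z)) A
  | eC {W : Ctx} {X Y A} : NDB (W.fill (.comma X Y)) A → NDB (W.fill (.comma Y X)) A
  | eW {W : Ctx} {X A} : NDB (W.fill (.comma X X)) A → NDB (W.fill X) A
  | eK {W : Ctx} {X Y A} : NDB (W.fill X) A → NDB (W.fill (.comma X Y)) A

/-- The alphabet {l, r, λ, ρ, n}. -/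
inductive Alpha : Type
  | l | r | lam | rho | n
deriving DecidableEq

/-- Finite words over the alphabet. -/
abbrev Word := List Alpha

/-- Immediate reduction ↝′ on words: x̄lλȳ ↝′ x̄ρȳ, x̄rλȳ ↝′ x̄ȳ, x̄λrȳ ↝′ x̄ȳ,
x̄ρrȳ ↝′ x̄lȳ, x̄nnȳ ↝′ x̄ȳ. -/
inductive Step : Word → Word → Prop
  | llam (x y : Word) : Step (x ++ [.l, .lam] ++ y) (x ++ [.rho] ++ y)
  | rlam (x y : Word) : Step (x ++ [.r, .lam] ++ y) (x ++ y)
  | lamr (x y : Word) : Step (x ++ [.lam, .r] ++ y) (x ++ y)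
  | rhor (x y : Word) : Step (x ++ [.rho, .r] ++ y) (x ++ [.l] ++ y)
  | nn (x y : Word) : Step (x ++ [.n, .n] ++ y) (x ++ y)

/-- A word is reduced if no immediate reduction step applies to it. -/
def Reduced (w : Word) : Prop := ∀ v, ¬ Step w v

/-- Reduction ↝ is the reflexive-transitive closure of immediate reduction. -/
def Reduces : Word → Word → Prop := Relation.ReflTransGen Step

open Classical in
/-- red(w): the (unique) reduced word to which w reduces. -/
noncomputable def red (w : Word) : Word :=
  if h : ∃ v, Reduces w v ∧ Reduced v then h.choose else w

/-- Extension of an rseq-substitution σ (a function from reduced words and atoms to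
formulas) to formulas: σ^x̄(¬A)=¬σ^{red(nx̄)}(A), σ^x̄(A→B)=σ^{red(lx̄)}(A)→σ^{red(rx̄)}(B),
σ^x̄(A∘B)=σ^{red(λx̄)}(A)∘σ^{red(ρx̄)}(B), and σ^x̄ commutes with ∧ and ∨. -/
noncomputable def rsubF (σ : Word → ℕ → Fml) : Word → Fml → Fml
  | x, .atom p => σ x p
  | x, .neg A => .neg (rsubF σ (red (.n :: x)) A)
  | x, .conj A B => .conj (rsubF σ x A) (rsubF σ x B)
  | x, .disj A B => .disj (rsubF σ x A) (rsubF σ x B)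
  | x, .imp A B => .imp (rsubF σ (red (.l :: x)) A) (rsubF σ (red (.r :: x)) B)
  | x, .fus A B => .fus (rsubF σ (red (.lam :: x)) A) (rsubF σ (red (.rho :: x)) B)

/-- Extension of an rseq-substitution to bunches: σ^x̄(X,Y)=σ^x̄(X),σ^x̄(Y) and
σ^x̄(X;Y)=σ^{red(λx̄)}(X);σ^{red(ρx̄)}(Y). -/
noncomputable def rsubB (σ : Word → ℕ → Fml) : Word → Bunch → Bunch
  | x, .fml A => .fml (rsubF σ x A)
  | x, .comma X Y => .comma (rsubB σ x X) (rsubB σ x Y)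
  | x, .semi X Y => .semi (rsubB σ (red (.lam :: x)) X) (rsubB σ (red (.rho :: x)) Y)


/-! ### Auxiliary development: the string rewriting system -/

/-- Head-step presentation of the rewriting rules. -/
inductive HS : Word → Word → Prop
  | llam (y) : HS (.l :: .lam :: y) (.rho :: y)
  | rlam (y) : HS (.r :: .lam :: y) y
  | lamr (y) : HS (.lam :: .r :: y) y
  | rhor (y) : HS (.rho :: .r :: y) (.l :: y)
  | nn (y) : HS (.n :: .n :: y) y

/-- Step as "head step or step under a cons". -/
inductive S : Word → Word → Prop
  | head {w v} : HS w v → S w v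
  | cons (a) {w v} : S w v → S (a :: w) (a :: v)

lemma S_append_left (x : Word) {w v : Word} (h : S w v) : S (x ++ w) (x ++ v) := by
  induction x with
  | nil => simpa
  | cons a x ih => exact S.cons a ih

lemma step_to_S {w v : Word} (h : Step w v) : S w v := by
  cases h with
  | llam x y => simpa using S_append_left x (S.head (HS.llam y))
  | rlam x y => simpa using S_append_left x (S.head (HS.rlam y))
  | lamr x y => simpa using S_append_left x (S.head (HS.lamr y))
  | rhor x y => simpa using S_append_left x (S.head (HS.rhor y))
  | nn x y => simpa using S_append_left x (S.head (HS.nn y))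

lemma S_to_step {w v : Word} (h : S w v) : Step w v := by
  induction h with
  | head h =>
    cases h with
    | llam y => simpa using Step.llam [] y
    | rlam _ => simpa using Step.rlam [] _
    | lamr _ => simpa using Step.lamr [] _
    | rhor y => simpa using Step.rhor [] y
    | nn _ => simpa using Step.nn [] _
  | cons a h ih =>
    cases ih with
    | llam x y => simpa using Step.llam (a :: x) y
    | rlam x y => simpa using Step.rlam (a :: x) y
    | lamr x y => simpa using Step.lamr (a :: x) y
    | rhor x y => simpa using Step.rhor (a :: x) y
    | nn x y => simpa using Step.nn (a :: x) y

lemma step_length {w v : Word} (h : Step w v) : v.length < w.length := by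
  cases h <;> simp [List.length_append] <;> omega

lemma exists_red_aux : ∀ (n : ℕ) (w : Word), w.length ≤ n → ∃ v, Reduces w v ∧ Reduced v := by
  intro n
  induction n with
  | zero =>
    intro w hw
    by_cases h : Reduced w
    · exact ⟨w, Relation.ReflTransGen.refl, h⟩
    · simp only [Reduced, not_forall, not_not] at h
      obtain ⟨v, hv⟩ := h
      exact absurd (step_length hv) (by omega)
  | succ n ih =>
    intro w hw
    by_cases h : Reduced w
    · exact ⟨w, Relation.ReflTransGen.refl, h⟩
    · simp only [Reduced, not_forall, not_not] at h
      obtain ⟨v, hv⟩ := h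
      obtain ⟨u, h1, h2⟩ := ih v (by have := step_length hv; omega)
      exact ⟨u, Relation.ReflTransGen.head hv h1, h2⟩

lemma red_spec (w : Word) : Reduces w (red w) ∧ Reduced (red w) := by
  have h : ∃ v, Reduces w v ∧ Reduced v := exists_red_aux w.length w le_rfl
  rw [red, dif_pos h]
  exact h.choose_spec

lemma red_reduces (w : Word) : Reduces w (red w) := (red_spec w).1
lemma red_reduced (w : Word) : Reduced (red w) := (red_spec w).2

/-- Strong local confluence: the head-step versus arbitrary-step case. -/
lemma S_sc_head {a b c : Word} (h1 : HS a b) (hac : S a c) :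
    ∃ d, Relation.ReflGen S b d ∧ Relation.ReflGen S c d := by
  cases h1 with
  | llam y =>
    cases hac with
    | head h2 => cases h2; exact ⟨_, .refl, .refl⟩
    | cons _ h2 =>
      cases h2 with
      | head h3 =>
        cases h3 with
        | lamr _ => exact ⟨_, .single (S.head (HS.rhor _)), .refl⟩
      | cons _ h3 => exact ⟨_, .single (S.cons _ h3), .single (S.head (HS.llam _))⟩
  | rlam y =>
    cases hac with
    | head h2 => cases h2; exact ⟨_, .refl, .refl⟩
    | cons _ h2 =>
      cases h2 with
      | head h3 =>
        cases h3 with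
        | lamr _ => exact ⟨_, .refl, .refl⟩
      | cons _ h3 => exact ⟨_, .single h3, .single (S.head (HS.rlam _))⟩
  | lamr y =>
    cases hac with
    | head h2 => cases h2; exact ⟨_, .refl, .refl⟩
    | cons _ h2 =>
      cases h2 with
      | head h3 =>
        cases h3 with
        | rlam _ => exact ⟨_, .refl, .refl⟩
      | cons _ h3 => exact ⟨_, .single h3, .single (S.head (HS.lamr _))⟩
  | rhor y =>
    cases hac with
    | head h2 => cases h2; exact ⟨_, .refl, .refl⟩
    | cons _ h2 =>
      cases h2 with
      | head h3 =>
        cases h3 with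
        | rlam _ => exact ⟨_, .single (S.head (HS.llam _)), .refl⟩
      | cons _ h3 => exact ⟨_, .single (S.cons _ h3), .single (S.head (HS.rhor _))⟩
  | nn y =>
    cases hac with
    | head h2 => cases h2; exact ⟨_, .refl, .refl⟩
    | cons _ h2 =>
      cases h2 with
      | head h3 =>
        cases h3 with
        | nn _ => exact ⟨_, .refl, .refl⟩
      | cons _ h3 => exact ⟨_, .single h3, .single (S.head (HS.nn _))⟩

lemma reflGen_cons (a : Alpha) {u v : Word} (h : Relation.ReflGen S u v) :
    Relation.ReflGen S (a :: u) (a :: v) := by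
  cases h with
  | refl => exact .refl
  | single h => exact .single (S.cons a h)

/-- Strong local confluence of `S`. -/
lemma S_sc {a b c : Word} (hab : S a b) (hac : S a c) :
    ∃ d, Relation.ReflGen S b d ∧ Relation.ReflGen S c d := by
  induction hab generalizing c with
  | head h1 => exact S_sc_head h1 hac
  | cons a1 h1 ih =>
    cases hac with
    | head h2 =>
      obtain ⟨d, h3, h4⟩ := S_sc_head h2 (S.cons a1 h1)
      exact ⟨d, h4, h3⟩
    | cons _ h2 =>
      obtain ⟨d, h3, h4⟩ := ih h2
      exact ⟨a1 :: d, reflGen_cons a1 h3, reflGen_cons a1 h4⟩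

lemma reflGen_S_to_reflGen_step {u v : Word} (h : Relation.ReflGen S u v) :
    Relation.ReflGen Step u v := by
  cases h with
  | refl => exact .refl
  | single h => exact .single (S_to_step h)

lemma reduces_join {a b c : Word} (hb : Reduces a b) (hc : Reduces a c) :
    ∃ d, Reduces b d ∧ Reduces c d := by
  have key : ∀ a b c : Word, Step a b → Step a c →
      ∃ d, Relation.ReflGen Step b d ∧ Relation.ReflTransGen Step c d := by
    intro a b c h1 h2
    obtain ⟨d, hd1, hd2⟩ := S_sc (step_to_S h1) (step_to_S h2)
    exact ⟨d, reflGen_S_to_reflGen_step hd1,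
      (reflGen_S_to_reflGen_step hd2).to_reflTransGen⟩
  exact Relation.church_rosser key hb hc

lemma reduced_reduces_eq {v d : Word} (hv : Reduced v) (h : Reduces v d) : v = d := by
  rcases (Relation.ReflTransGen.cases_head h) with h | ⟨e, he, _⟩
  · exact h
  · exact absurd he (hv e)

lemma red_eq_of {w v : Word} (h : Reduces w v) (hv : Reduced v) : red w = v := by
  obtain ⟨d, hd1, hd2⟩ := reduces_join (red_reduces w) h
  rw [reduced_reduces_eq (red_reduced w) hd1, reduced_reduces_eq hv hd2]

lemma red_of_reduced {w : Word} (h : Reduced w) : red w = w :=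
  red_eq_of Relation.ReflTransGen.refl h

lemma reduces_cons (a : Alpha) {w v : Word} (h : Reduces w v) :
    Reduces (a :: w) (a :: v) :=
  Relation.ReflTransGen.lift (a :: ·) (fun _ _ hs => S_to_step (S.cons a (step_to_S hs))) _ _ h

lemma red_cons (a : Alpha) (x : Word) : red (a :: red x) = red (a :: x) := by
  have h1 : Reduces (a :: x) (red (a :: red x)) :=
    (reduces_cons a (red_reduces x)).trans (red_reduces _)
  exact (red_eq_of h1 (red_reduced _)).symm

lemma red_of_step {w v : Word} (h : Step w v) : red w = red v :=
  red_eq_of ((Relation.ReflTransGen.single h).trans (red_reduces v)) (red_reduced v)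

/-! ### The key word identities -/

lemma J1 (x : Word) (hx : Reduced x) : red (.lam :: red (.r :: x)) = x := by
  rw [red_cons, red_of_step (by simpa using Step.lamr [] x), red_of_reduced hx]

lemma J2 (x : Word) : red (.rho :: red (.r :: x)) = red (.l :: x) := by
  rw [red_cons]; exact red_of_step (by simpa using Step.rhor [] x)

lemma J3 (x : Word) : red (.l :: red (.lam :: x)) = red (.rho :: x) := by
  rw [red_cons]; exact red_of_step (by simpa using Step.llam [] x)

lemma J4 (x : Word) (hx : Reduced x) : red (.r :: red (.lam :: x)) = x := by
  rw [red_cons, red_of_step (by simpa using Step.rlam [] x), red_of_reduced hx]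

lemma J5 (x : Word) (hx : Reduced x) : red (.n :: red (.n :: x)) = x := by
  rw [red_cons, red_of_step (by simpa using Step.nn [] x), red_of_reduced hx]

lemma reduced_nil : Reduced ([] : Word) := by
  intro v h
  have := step_length h
  simp at this

/-! ### Substitution in contexts -/

/-- The word of the hole position of a context, given the word of the whole bunch. -/
noncomputable def ctxWord : Word → Ctx → Word
  | x, .hole => x
  | x, .commaL c _ => ctxWord x c
  | x, .commaR _ c => ctxWord x c
  | x, .semiL c _ => ctxWord (red (.lam :: x)) c
  | x, .semiR _ c => ctxWord (red (.rho :: x)) c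

lemma ctxWord_reduced (Y : Ctx) : ∀ x : Word, Reduced x → Reduced (ctxWord x Y) := by
  induction Y with
  | hole => intro x hx; exact hx
  | commaL c Z ih => intro x hx; exact ih x hx
  | commaR Z c ih => intro x hx; exact ih x hx
  | semiL c Z ih => intro x hx; exact ih _ (red_reduced _)
  | semiR Z c ih => intro x hx; exact ih _ (red_reduced _)

/-- Substitution applied to a context. -/
noncomputable def rsubC (σ : Word → ℕ → Fml) : Word → Ctx → Ctx
  | _, .hole => .hole
  | x, .commaL c Y => .commaL (rsubC σ x c) (rsubB σ x Y)
  | x, .commaR Y c => .commaR (rsubB σ x Y) (rsubC σ x c)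
  | x, .semiL c Y => .semiL (rsubC σ (red (.lam :: x)) c) (rsubB σ (red (.rho :: x)) Y)
  | x, .semiR Y c => .semiR (rsubB σ (red (.lam :: x)) Y) (rsubC σ (red (.rho :: x)) c)

lemma rsubB_fill (σ : Word → ℕ → Fml) :
    ∀ (Y : Ctx) (x : Word) (X : Bunch),
      rsubB σ x (Y.fill X) = (rsubC σ x Y).fill (rsubB σ (ctxWord x Y) X) := by
  intro Y
  induction Y with
  | hole => intro x X; rfl
  | commaL c Z ih => intro x X; simp [Ctx.fill, rsubB, rsubC, ctxWord, ih]
  | commaR Z c ih => intro x X; simp [Ctx.fill, rsubB, rsubC, ctxWord, ih]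
  | semiL c Z ih => intro x X; simp [Ctx.fill, rsubB, rsubC, ctxWord, ih]
  | semiR Z c ih => intro x X; simp [Ctx.fill, rsubB, rsubC, ctxWord, ih]

/-! ### The main induction -/

lemma NDB_rseq_main (σ : Word → ℕ → Fml) {X : Bunch} {A : Fml} (h : NDB X A) :
    ∀ x : Word, Reduced x → NDB (rsubB σ x X) (rsubF σ x A) := by
  induction h with
  | id A => intro x hx; exact NDB.id _
  | impI h ih =>
    intro x hx
    have h1 := ih (red (.r :: x)) (red_reduced _)
    simp only [rsubB, rsubF] at h1 ⊢
    rw [J1 x hx, J2 x] at h1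
    exact NDB.impI h1
  | impE h1 h2 ih1 ih2 =>
    intro x hx
    have g1 := ih1 (red (.lam :: x)) (red_reduced _)
    have g2 := ih2 (red (.rho :: x)) (red_reduced _)
    simp only [rsubB, rsubF] at g1 ⊢
    rw [J3 x, J4 x hx] at g1
    exact NDB.impE g1 g2
  | orI1 B h ih =>
    intro x hx
    simp only [rsubF]
    exact NDB.orI1 _ (ih x hx)
  | orI2 A h ih =>
    intro x hx
    simp only [rsubF]
    exact NDB.orI2 _ (ih x hx)
  | orE h1 h2 h3 ih1 ih2 ih3 =>
    intro x hx
    rename_i X A B C Y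
    have g1 := ih1 (ctxWord x Y) (ctxWord_reduced Y x hx)
    have g2 := ih2 x hx
    have g3 := ih3 x hx
    simp only [rsubF] at g1
    rw [rsubB_fill σ] at g2 g3 ⊢
    simp only [rsubB] at g2 g3
    exact NDB.orE g1 g2 g3
  | andI h1 h2 ih1 ih2 =>
    intro x hx
    simp only [rsubB, rsubF]
    exact NDB.andI (ih1 x hx) (ih2 x hx)
  | andE h1 h2 ih1 ih2 =>
    intro x hx
    rename_i X A B C Y
    have g1 := ih1 (ctxWord x Y) (ctxWord_reduced Y x hx)
    have g2 := ih2 x hx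
    simp only [rsubF] at g1
    rw [rsubB_fill σ] at g2 ⊢
    simp only [rsubB] at g2
    exact NDB.andE g1 g2
  | fusI h1 h2 ih1 ih2 =>
    intro x hx
    simp only [rsubB, rsubF]
    exact NDB.fusI (ih1 (red (.lam :: x)) (red_reduced _))
      (ih2 (red (.rho :: x)) (red_reduced _))
  | fusE h1 h2 ih1 ih2 =>
    intro x hx
    rename_i X A B C Y
    have g1 := ih1 (ctxWord x Y) (ctxWord_reduced Y x hx)
    have g2 := ih2 x hx
    simp only [rsubF] at g1
    rw [rsubB_fill σ] at g2 ⊢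
    simp only [rsubB] at g2
    exact NDB.fusE g1 g2
  | negI h1 h2 ih1 ih2 =>
    intro x hx
    have g1 := ih1 x hx
    have g2 := ih2 (red (.n :: x)) (red_reduced _)
    simp only [rsubB, rsubF] at g2 ⊢
    rw [J5 x hx] at g2
    exact NDB.negI g1 g2
  | negE h ih =>
    intro x hx
    have g := ih x hx
    simp only [rsubF] at g
    rw [J5 x hx] at g
    exact NDB.negE g
  | cut h1 h2 ih1 ih2 =>
    intro x hx
    rename_i X A B Y
    have g1 := ih1 (ctxWord x Y) (ctxWord_reduced Y x hx)
    have g2 := ih2 x hx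
    rw [rsubB_fill σ] at g2 ⊢
    simp only [rsubB] at g2
    exact NDB.cut g1 g2
  | eB h ih =>
    intro x hx
    have g := ih x hx
    rw [rsubB_fill σ] at g ⊢
    simp only [rsubB] at g ⊢
    exact NDB.eB g
  | eC h ih =>
    intro x hx
    have g := ih x hx
    rw [rsubB_fill σ] at g ⊢
    simp only [rsubB] at g ⊢
    exact NDB.eC g
  | eW h ih =>
    intro x hx
    have g := ih x hx
    rw [rsubB_fill σ] at g ⊢
    simp only [rsubB] at g ⊢
    exact NDB.eW g
  | eK h ih =>
    intro x hx
    have g := ih x hx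
    rw [rsubB_fill σ] at g ⊢
    simp only [rsubB] at g ⊢
    exact NDB.eK g

/-- The natural deduction system B is weakly invariant under rseq-substitutions:
if X ⊩ A is provable in B and σ is an rseq-substitution, then σ^ε(X) ⊩ σ^ε(A) is
provable in B. -/
theorem NDB_rseq_invariance (X : Bunch) (A : Fml) (h : NDB X A)
    (σ : Word → ℕ → Fml) : NDB (rsubB σ [] X) (rsubF σ [] A) :=
  NDB_rseq_main σ h [] reduced_nil
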